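/- arXiv:1710.02300 — 4 statements merged into one kernel-verified Lean document; each statement's English description precedes it below -/
import Mathlib

section
/- Let M be a binary matroid, T ⊆ E(M), and F ⊆ E(M) \ T. Then the matroid M − F (obtained by deleting the elements of F) has no circuit containing an element of T if and only if for every t ∈ T there is a cocircuit C of M with t ∈ C ⊆ F ∪ {t}. -/
open Set

variable {α : Type*}

/-- A circuit of a matroid: an inclusion-minimal dependent set. -/
def MCircuit (M : Matroid α) (C : Set α) : Prop :=
  M.Dep C ∧ ∀ C' ⊂ C, M.Indep C'

/-- A binary matroid: one representable over GF(2). -/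
def IsBinary (M : Matroid α) : Prop :=
  ∃ (n : ℕ) (φ : α → (Fin n → ZMod 2)),
    ∀ I ⊆ M.E, (M.Indep I ↔ LinearIndependent (ZMod 2) (fun x : I => φ x))

/-- A cycle of a matroid: a (possibly empty) disjoint union of circuits. -/
def MCycle (M : Matroid α) (C : Set α) : Prop :=
  ∃ 𝒞 : Set (Set α), (∀ D ∈ 𝒞, MCircuit M D) ∧ 𝒞.Pairwise Disjoint ∧ C = ⋃₀ 𝒞

/-- Deletion of a set of elements from a matroid. -/
def MDelete (M : Matroid α) (D : Set α) : Matroid α := M.restrict (M.E \ D)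

/-- The rank of a matroid: the supremum of sizes of independent sets. -/
noncomputable def mRank (M : Matroid α) : ℕ := sSup (Set.ncard '' {I | M.Indep I})

/-!
The circuits of `M ＼ F` avoid `T` exactly when every `t ∈ T` is a coloop of `M ＼ F`,
i.e. a loop of `(M ＼ F)✶ = M✶ ／ F`. Since `t ∉ F`, that means `t ∈ M✶.closure F`, which
is witnessed by a circuit of `M✶` through `t` inside `F ∪ {t}`.
-/

namespace Matroid

lemma mCircuit_iff_isCircuit {M : Matroid α} {C : Set α} : MCircuit M C ↔ M.IsCircuit C := by
  rw [isCircuit_iff_forall_ssubset, MCircuit]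

lemma mDelete_eq_delete (M : Matroid α) (F : Set α) : MDelete M F = M ＼ F := rfl

lemma forall_isCircuit_disjoint_iff {N : Matroid α} {T : Set α} (hT : T ⊆ N.E) :
    (∀ C, N.IsCircuit C → Disjoint C T) ↔ ∀ e ∈ T, N.IsColoop e := by
  simp only [disjoint_right]
  constructor
  · exact fun h e he ↦ (isColoop_iff_forall_notMem_isCircuit (hT he)).2 fun C hC ↦ h C hC he
  · exact fun h C hC e he ↦ (h e he).notMem_isCircuit hC

lemma delete_isColoop_iff_exists_isCocircuit {M : Matroid α} {F : Set α} {e : α} (he : e ∉ F) :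
    (M ＼ F).IsColoop e ↔ ∃ C, M.IsCocircuit C ∧ e ∈ C ∧ C ⊆ F ∪ {e} := by
  rw [IsColoop, dual_delete, contract_isLoop_iff_mem_closure, and_iff_left he,
    mem_closure_iff_exists_isCircuit he, union_singleton]
  exact ⟨fun ⟨C, hCF, hC, heC⟩ ↦ ⟨C, hC, heC, hCF⟩, fun ⟨C, hC, heC, hCF⟩ ↦ ⟨C, hCF, hC, heC⟩⟩

end Matroid

theorem restricted_subset_feedback_duality_general (M : Matroid α)
    (T F : Set α) (hT : T ⊆ M.E) (hF : F ⊆ M.E \ T) :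
    (∀ C, MCircuit (MDelete M F) C → Disjoint C T) ↔
      (∀ t ∈ T, ∃ C, MCircuit M✶ C ∧ t ∈ C ∧ C ⊆ F ∪ {t}) := by
  have hTF : ∀ t ∈ T, t ∉ F := fun t ht htF ↦ (hF htF).2 ht
  have hTE : T ⊆ (M.delete F).E := fun t ht ↦ ⟨hT ht, hTF t ht⟩
  simp only [Matroid.mCircuit_iff_isCircuit, Matroid.mDelete_eq_delete,
    Matroid.forall_isCircuit_disjoint_iff hTE]
  exact forall₂_congr fun t ht ↦ Matroid.delete_isColoop_iff_exists_isCocircuit (hTF t ht)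

theorem restricted_subset_feedback_duality (M : Matroid α) (hM : IsBinary M)
    (T F : Set α) (hT : T ⊆ M.E) (hF : F ⊆ M.E \ T) :
    (∀ C, MCircuit (MDelete M F) C → Disjoint C T) ↔
      (∀ t ∈ T, ∃ C, MCircuit M✶ C ∧ t ∈ C ∧ C ⊆ F ∪ {t}) :=
  restricted_subset_feedback_duality_general M T F hT hF
end

section
/- Let M be a binary matroid, let C = {e₁, e₂, e₃} be a circuit of M, and let F ⊆ E(M) \ C be a set of minimum weight (with respect to a weight function w : E(M) → ℕ) such that M has circuits C₁ and C₂ with e₁ ∈ C₁ ⊆ F ∪ {e₁} and e₂ ∈ C₂ ⊆ F ∪ {e₂}. Then M also has a circuit C₃ with e₃ ∈ C₃ ⊆ F ∪ {e₃}. -/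
open Set

variable {α : Type*}

/-! Fix a representation `φ` of `M` over `GF(2)`. Every circuit has `φ`-sum zero and, conversely,
a finite set of `φ`-sum zero containing `e` contains a circuit through `e` (peel off circuits
avoiding `e`). In characteristic two, `φ`-sums add under symmetric difference, so
`C₁ ∆ C₂ ∆ {e₁, e₂, e₃}` has `φ`-sum zero; it contains `e₃` and lies in `F ∪ {e₃}`. -/

open scoped symmDiff

lemma mCircuit_iff_isCircuit {M : Matroid α} {C : Set α} : MCircuit M C ↔ M.IsCircuit C := by
  rw [Matroid.isCircuit_iff_forall_ssubset]; rfl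

def Matroid.IsRepresentedBy (M : Matroid α) (K : Type*) {V : Type*} [Semiring K]
    [AddCommMonoid V] [Module K V] (φ : α → V) : Prop :=
  ∀ I ⊆ M.E, M.Indep I ↔ LinearIndependent K (fun x : I => φ x)

lemma add_self_eq_zero_of_zmod_two {V : Type*} [AddCommGroup V] [Module (ZMod 2) V] (v : V) :
    v + v = 0 := by
  rw [← one_smul (ZMod 2) v, ← add_smul]
  exact zero_smul _ v

lemma Finset.sum_symmDiff_of_zmod_two {V : Type*} [DecidableEq α] [AddCommGroup V]
    [Module (ZMod 2) V] (s t : Finset α) (f : α → V) :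
    ∑ x ∈ s ∆ t, f x = ∑ x ∈ s, f x + ∑ x ∈ t, f x := by
  rw [symmDiff_eq_sup_sdiff_inf, Finset.sup_eq_union, Finset.inf_eq_inter,
    ← Finset.sum_union_inter, ← Finset.sum_sdiff Finset.inter_subset_union, add_assoc,
    add_self_eq_zero_of_zmod_two, add_zero]

lemma ZMod.sum_two_smul_eq_sum_filter {ι V : Type*} [AddCommGroup V] [Module (ZMod 2) V]
    (s : Finset ι) (g : ι → ZMod 2) (v : ι → V) :
    ∑ i ∈ s, g i • v i = ∑ i ∈ s with g i ≠ 0, v i := by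
  rw [← Finset.sum_filter_of_ne (p := fun i => g i ≠ 0) fun i _ h hg => h (by rw [hg, zero_smul])]
  refine Finset.sum_congr rfl fun i hi => ?_
  have hg1 : ∀ a : ZMod 2, a ≠ 0 → a = 1 := by decide
  rw [hg1 _ (Finset.mem_filter.1 hi).2, one_smul]

namespace Matroid.IsRepresentedBy

variable {M : Matroid α}

lemma dep_of_sum_eq_zero {K V : Type*} [Ring K] [Nontrivial K] [AddCommGroup V] [Module K V]
    {φ : α → V} (hφ : M.IsRepresentedBy K φ) {T : Finset α} (hTE : ↑T ⊆ M.E) (hT : T.Nonempty)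
    (hsum : ∑ x ∈ T, φ x = 0) : M.Dep ↑T := by
  refine ⟨fun hI => ?_, hTE⟩
  obtain ⟨e, he⟩ := hT
  have hrel : ∑ x : (T : Set α), (1 : K) • φ x = 0 := by
    simpa [Finset.sum_attach] using hsum
  exact one_ne_zero (Fintype.linearIndependent_iff.1 ((hφ _ hTE).1 hI) _ hrel ⟨e, he⟩)

variable {V : Type*} [AddCommGroup V] [Module (ZMod 2) V] {φ : α → V}

lemma exists_finset_sum_eq_zero_of_isCircuit (hφ : M.IsRepresentedBy (ZMod 2) φ) {C : Set α}
    (hC : M.IsCircuit C) : ∃ S : Finset α, ↑S = C ∧ ∑ x ∈ S, φ x = 0 := by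
  classical
  have hdep : ¬ LinearIndependent (ZMod 2) (fun x : C => φ x) :=
    fun h => hC.not_indep ((hφ C hC.subset_ground).2 h)
  obtain ⟨s, g, hrel, i₀, hi₀s, hi₀⟩ := not_linearIndependent_iff.1 hdep
  set S : Finset α := (s.filter (g · ≠ 0)).map (Function.Embedding.subtype _)
  have hS : ∑ x ∈ S, φ x = 0 := by
    rw [Finset.sum_map, ← hrel, ZMod.sum_two_smul_eq_sum_filter]; rfl
  have hSC : ↑S ⊆ C := by
    rintro _ hx
    obtain ⟨i, -, rfl⟩ := Finset.mem_map.1 hx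
    exact i.2
  have hSne : S.Nonempty := ⟨i₀, Finset.mem_map_of_mem _ (Finset.mem_filter.2 ⟨hi₀s, hi₀⟩)⟩
  have hSdep : M.Dep ↑S := hφ.dep_of_sum_eq_zero (hSC.trans hC.subset_ground) hSne hS
  exact ⟨S, hC.eq_of_dep_subset hSdep hSC, hS⟩

lemma exists_isCircuit_mem_subset_of_sum_eq_zero (hφ : M.IsRepresentedBy (ZMod 2) φ)
    {X : Finset α} (hXE : ↑X ⊆ M.E) (hX : ∑ x ∈ X, φ x = 0) {e : α} (he : e ∈ X) :
    ∃ C, M.IsCircuit C ∧ e ∈ C ∧ C ⊆ ↑X := by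
  classical
  induction X using Finset.strongInduction with
  | H X ih =>
  obtain ⟨C, hCX, hC⟩ := (hφ.dep_of_sum_eq_zero hXE ⟨e, he⟩ hX).exists_isCircuit_subset
  by_cases heC : e ∈ C
  · exact ⟨C, hC, heC, hCX⟩
  obtain ⟨S, rfl, hS⟩ := hφ.exists_finset_sum_eq_zero_of_isCircuit hC
  have hSX : S ⊆ X := Finset.coe_subset.1 hCX
  have hXS : X \ S ⊂ X := Finset.sdiff_ssubset hSX (by simpa using hC.nonempty)
  have hsum : ∑ x ∈ X \ S, φ x = 0 := by
    simpa [hS, hX] using Finset.sum_sdiff hSX (f := φ)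
  obtain ⟨C', hC', heC', hC'X⟩ := ih _ hXS (by push_cast; exact sdiff_subset.trans hXE) hsum
    (Finset.mem_sdiff.2 ⟨he, heC⟩)
  exact ⟨C', hC', heC', hC'X.trans (Finset.coe_subset.2 hXS.subset)⟩

end Matroid.IsRepresentedBy

lemma mem_symmDiff_triangle_and_subset {F C₁ C₂ : Set α} {e₁ e₂ e₃ : α} (h12 : e₁ ≠ e₂)
    (h13 : e₁ ≠ e₃) (h23 : e₂ ≠ e₃) (hF : Disjoint F {e₁, e₂, e₃}) (he₁ : e₁ ∈ C₁)
    (hC₁ : C₁ ⊆ F ∪ {e₁}) (he₂ : e₂ ∈ C₂) (hC₂ : C₂ ⊆ F ∪ {e₂}) :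
    e₃ ∈ C₁ ∆ C₂ ∆ {e₁, e₂, e₃} ∧ C₁ ∆ C₂ ∆ {e₁, e₂, e₃} ⊆ F ∪ {e₃} := by
  simp only [Set.disjoint_left, Set.subset_def, Set.mem_symmDiff, Set.mem_union,
    Set.mem_insert_iff, Set.mem_singleton_iff] at *
  grind

theorem triangle_min_weight_spans_third_general (M : Matroid α) (hM : IsBinary M)
    (e₁ e₂ e₃ : α) (h12 : e₁ ≠ e₂) (h13 : e₁ ≠ e₃) (h23 : e₂ ≠ e₃)
    (hC : MCircuit M {e₁, e₂, e₃}) (F : Finset α)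
    (hF : (F : Set α) ⊆ M.E \ {e₁, e₂, e₃})
    (h1 : ∃ C₁, MCircuit M C₁ ∧ e₁ ∈ C₁ ∧ C₁ ⊆ ↑F ∪ {e₁})
    (h2 : ∃ C₂, MCircuit M C₂ ∧ e₂ ∈ C₂ ∧ C₂ ⊆ ↑F ∪ {e₂}) :
    ∃ C₃, MCircuit M C₃ ∧ e₃ ∈ C₃ ∧ C₃ ⊆ ↑F ∪ {e₃} := by
  classical
  obtain ⟨_, φ, hφ : M.IsRepresentedBy (ZMod 2) φ⟩ := hM
  simp only [mCircuit_iff_isCircuit] at hC h1 h2 ⊢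
  obtain ⟨_, hC₁, he₁, hC₁F⟩ := h1
  obtain ⟨_, hC₂, he₂, hC₂F⟩ := h2
  obtain ⟨S₁, rfl, hS₁⟩ := hφ.exists_finset_sum_eq_zero_of_isCircuit hC₁
  obtain ⟨S₂, rfl, hS₂⟩ := hφ.exists_finset_sum_eq_zero_of_isCircuit hC₂
  obtain ⟨S, hSC, hS⟩ := hφ.exists_finset_sum_eq_zero_of_isCircuit hC
  have hcycle : ∑ x ∈ S₁ ∆ S₂ ∆ S, φ x = 0 := by
    simp only [Finset.sum_symmDiff_of_zmod_two, hS₁, hS₂, hS, add_zero]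
  obtain ⟨he₃, hF₃⟩ : e₃ ∈ (↑(S₁ ∆ S₂ ∆ S) : Set α) ∧ ↑(S₁ ∆ S₂ ∆ S) ⊆ (F : Set α) ∪ {e₃} := by
    simpa only [Finset.coe_symmDiff, hSC] using mem_symmDiff_triangle_and_subset h12 h13 h23
      (Set.subset_sdiff.1 hF).2 he₁ hC₁F he₂ hC₂F
  have hE : (F : Set α) ∪ {e₃} ⊆ M.E :=
    Set.union_subset (hF.trans Set.sdiff_subset) (by simpa using hC.subset_ground (by simp))
  obtain ⟨C₃, hC₃, he₃C₃, hC₃S⟩ :=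
    hφ.exists_isCircuit_mem_subset_of_sum_eq_zero (hF₃.trans hE) hcycle he₃
  exact ⟨C₃, hC₃, he₃C₃, hC₃S.trans hF₃⟩

theorem triangle_min_weight_spans_third (M : Matroid α) (hM : IsBinary M) (w : α → ℕ)
    (e₁ e₂ e₃ : α) (h12 : e₁ ≠ e₂) (h13 : e₁ ≠ e₃) (h23 : e₂ ≠ e₃)
    (hC : MCircuit M {e₁, e₂, e₃}) (F : Finset α)
    (hF : (F : Set α) ⊆ M.E \ {e₁, e₂, e₃})
    (h1 : ∃ C₁, MCircuit M C₁ ∧ e₁ ∈ C₁ ∧ C₁ ⊆ ↑F ∪ {e₁})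
    (h2 : ∃ C₂, MCircuit M C₂ ∧ e₂ ∈ C₂ ∧ C₂ ⊆ ↑F ∪ {e₂})
    (hmin : ∀ F' : Finset α, (F' : Set α) ⊆ M.E \ {e₁, e₂, e₃} →
      (∃ C₁, MCircuit M C₁ ∧ e₁ ∈ C₁ ∧ C₁ ⊆ ↑F' ∪ {e₁}) →
      (∃ C₂, MCircuit M C₂ ∧ e₂ ∈ C₂ ∧ C₂ ⊆ ↑F' ∪ {e₂}) →
      ∑ x ∈ F, w x ≤ ∑ x ∈ F', w x) :
    ∃ C₃, MCircuit M C₃ ∧ e₃ ∈ C₃ ∧ C₃ ⊆ ↑F ∪ {e₃} :=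
  triangle_min_weight_spans_third_general M hM e₁ e₂ e₃ h12 h13 h23 hC F hF h1 h2
end

section
/- Let M be a binary matroid and let k ≥ h ≥ 1 be integers. Then there exists X ⊆ E(M) with |X| ≤ k and r(M) − r(M − X) ≥ h if and only if there exist disjoint sets F, T ⊆ E(M) with |T| = h, |F| ≤ k − h, and T ⊆ span_{M*}(F). -/
open Set

variable {α : Type*}

/-!
Deleting a set of coloops lowers the rank by its size, and the coloops of `M ＼ F` outside `F`
are exactly the loops of `M✶ ／ F`, i.e. `M✶.closure F \ F`. So if `T ⊆ M✶.closure F`, deleting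
`F ∪ T` lowers the rank by at least `|T|`. Conversely, if deleting `X` lowers the rank by `h`,
extend a basis `B'` of `M.E \ X` to a base `B`; any `h` elements `T` of `B \ B' ⊆ X` are coloops
of `M ＼ (X \ T)`, since `B' ∪ T` spans its ground set.
-/

namespace Matroid

variable {M : Matroid α} {B B' F K T X : Set α}

lemma coloops_delete (M : Matroid α) (F : Set α) : (M ＼ F).coloops = M✶.closure F \ F := by
  rw [← dual_loops, dual_delete, contract_loops_eq]

lemma eRank_delete_add_encard_of_subset_coloops (hK : K ⊆ M.coloops) :
    (M ＼ K).eRank + K.encard = M.eRank := by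
  have hKE : K ⊆ M.E := hK.trans M.coloops_subset_ground
  have hdual : M✶.eRk K = 0 := (eRk_eq_zero_iff (M := M✶) hKE).2 hK
  rw [delete_eq_restrict, eRank_restrict, ← M.eRk_dual_add_eRank K, hdual, zero_add]

lemma eRank_delete_le (M : Matroid α) (X : Set α) : (M ＼ X).eRank ≤ M.eRank :=
  M.eRk_le_eRank _

lemma eRank_delete_union_add_encard_le (hT : T ⊆ (M ＼ F).coloops) :
    (M ＼ (F ∪ T)).eRank + T.encard ≤ M.eRank := by
  rw [← delete_delete, eRank_delete_add_encard_of_subset_coloops hT]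
  exact M.eRank_delete_le F

lemma Indep.subset_coloops_delete_sdiff (hB : M.Indep B) (hB' : M.IsBasis B' (M.E \ X))
    (hB'B : B' ⊆ B) (hT : T ⊆ B \ B') : T ⊆ (M ＼ (X \ T)).coloops := by
  intro t htT
  have htB := hT htT
  rw [← isColoop_iff_mem_coloops, delete_isColoop_iff]
  refine ⟨fun ht => hB.notMem_closure_sdiff_of_mem htB.1 ?_, hB.subset_ground htB.1,
    fun ht => ht.2 htT⟩
  refine closure_subset_closure_of_subset_closure ?_ ht
  rintro x ⟨⟨hxE, hxXT⟩, hxt⟩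
  by_cases hxT : x ∈ T
  · exact M.subset_closure _ (sdiff_subset.trans hB.subset_ground) ⟨(hT hxT).1, hxt⟩
  · have hB't : B' ⊆ B \ {t} := fun y hy => ⟨hB'B hy, by rintro rfl; exact htB.2 hy⟩
    exact M.closure_subset_closure hB't
      (hB'.subset_closure ⟨hxE, fun hxX => hxXT ⟨hxX, hxT⟩⟩)

lemma exists_subset_coloops_delete_sdiff [M.RankFinite] {n : ℕ}
    (hX : (M ＼ X).eRank + n ≤ M.eRank) :
    ∃ T ⊆ X, T.encard = n ∧ T ⊆ (M ＼ (X \ T)).coloops := by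
  obtain ⟨B', hB'⟩ := M.exists_isBasis (M.E \ X)
  obtain ⟨B, hB, hB'B⟩ := hB'.indep.exists_isBase_superset
  have hBB'X : B \ B' ⊆ X := by
    have hB'eq : B' = B ∩ (M.E \ X) :=
      hB'.eq_of_subset_indep (hB.indep.subset inter_subset_left)
        (subset_inter hB'B hB'.subset) inter_subset_right
    rintro e ⟨heB, heB'⟩
    by_contra heX
    exact heB' (hB'eq ▸ ⟨heB, hB.subset_ground heB, heX⟩)
  have hn : (n : ℕ∞) ≤ (B \ B').encard := by
    rw [← delete_isBase_iff.2 hB' |>.encard_eq_eRank, ← hB.encard_eq_eRank,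
      ← encard_sdiff_add_encard_of_subset hB'B, add_comm (B \ B').encard] at hX
    exact (ENat.add_le_add_iff_left (hB'.indep.finite.encard_lt_top.ne)).1 hX
  obtain ⟨T, hTB, hTn⟩ := exists_subset_encard_eq hn
  exact ⟨T, hTB.trans hBB'X, hTn, hB.indep.subset_coloops_delete_sdiff hB' hB'B hTB⟩

lemma mRank_eq_eRank (M : Matroid α) [M.RankFinite] : (mRank M : ℕ∞) = M.eRank := by
  obtain ⟨B, hB⟩ := M.exists_isBase
  have hmax : IsGreatest (ncard '' {I | M.Indep I}) B.ncard := by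
    refine ⟨⟨B, hB.indep, rfl⟩, ?_⟩
    rintro _ ⟨I, hI, rfl⟩
    have hle := hI.encard_le_eRank
    rwa [← hB.encard_eq_eRank, ← hI.finite.cast_ncard_eq, ← hB.finite.cast_ncard_eq,
      Nat.cast_le] at hle
  rw [mRank, hmax.csSup_eq, hB.finite.cast_ncard_eq, hB.encard_eq_eRank]

lemma le_mRank_sub_mRank_delete_iff [M.RankFinite] {n : ℕ} :
    n ≤ mRank M - mRank (M ＼ X) ↔ (M ＼ X).eRank + n ≤ M.eRank := by
  have hle := M.eRank_delete_le X
  rw [← mRank_eq_eRank, ← mRank_eq_eRank] at hle ⊢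
  norm_cast at hle ⊢
  omega

end Matroid

open Matroid

lemma IsBinary.rankFinite {M : Matroid α} (hM : IsBinary M) : M.RankFinite := by
  obtain ⟨n, φ, hφ⟩ := hM
  obtain ⟨B, hB⟩ := M.exists_isBase
  have hli := (hφ B hB.subset_ground).1 hB.indep
  exact ⟨B, hB, finite_coe_iff.1 hli.finite⟩

theorem rank_reduction_iff_space_cover_dual_general (M : Matroid α) (hM : IsBinary M)
    (h k : ℕ) (hk : h ≤ k) :
    (∃ X ⊆ M.E, X.ncard ≤ k ∧ h ≤ mRank M - mRank (MDelete M X)) ↔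
      (∃ F T : Set α, F ⊆ M.E ∧ T ⊆ M.E ∧ Disjoint F T ∧ T.ncard = h ∧
        F.ncard ≤ k - h ∧ T ⊆ M✶.closure F) := by
  have := hM.rankFinite
  simp only [MDelete, ← delete_eq_restrict, le_mRank_sub_mRank_delete_iff]
  constructor
  · rintro ⟨X, hXE, hXk, hX⟩
    obtain ⟨T, hTX, hTh, hT⟩ := exists_subset_coloops_delete_sdiff hX
    have hTfin : T.Finite := finite_of_encard_eq_coe hTh
    have hTh' : T.ncard = h := by rw [ncard_def, hTh]; rfl
    refine ⟨X \ T, T, sdiff_subset.trans hXE, hTX.trans hXE, disjoint_sdiff_left, hTh', ?_,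
      fun t ht => (coloops_delete M _ ▸ hT ht).1⟩
    rw [ncard_sdiff hTX hTfin, hTh']
    omega
  · rintro ⟨F, T, hFE, hTE, hFT, rfl, hFk, hTF⟩
    refine ⟨F ∪ T, union_subset hFE hTE, (ncard_union_le F T).trans (by omega), ?_⟩
    have hT : T ⊆ (M ＼ F).coloops := coloops_delete M F ▸ subset_sdiff.2 ⟨hTF, hFT.symm⟩
    exact le_trans (by gcongr; exact ncard_le_encard T) (eRank_delete_union_add_encard_le hT)

theorem rank_reduction_iff_space_cover_dual (M : Matroid α) (hM : IsBinary M)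
    (h k : ℕ) (hh : 1 ≤ h) (hk : h ≤ k) :
    (∃ X ⊆ M.E, X.ncard ≤ k ∧ h ≤ mRank M - mRank (MDelete M X)) ↔
      (∃ F T : Set α, F ⊆ M.E ∧ T ⊆ M.E ∧ Disjoint F T ∧ T.ncard = h ∧
        F.ncard ≤ k - h ∧ T ⊆ M✶.closure F) :=
  rank_reduction_iff_space_cover_dual_general M hM h k hk
end

section
/- Every circuit of the matroid R₁₀ has even cardinality. -/
/-- The columns of the standard representation of R₁₀: the vectors in GF(2)⁵
with exactly three nonzero entries. -/
def R10Cols : Set (Fin 5 → ZMod 2) :=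
  {v | (Finset.univ.filter (fun i => v i = 1)).card = 3}

/-! Over GF(2) a circuit is a finite set of vectors with sum zero. The coordinate-sum
functional takes the value 1 on every column of R₁₀, since each has odd weight 3; applied to
the zero sum of a circuit it shows that the circuit has an even number of elements. -/

open Finset

namespace ZMod

lemma eq_one_of_ne_zero_two {a : ZMod 2} (ha : a ≠ 0) : a = 1 := by
  decide +revert

lemma sum_eq_card_filter_eq_one {ι : Type*} [Fintype ι] (v : ι → ZMod 2) :
    ∑ i, v i = #{i | v i = 1} := by
  rw [← sum_boole]
  refine sum_congr rfl fun i _ => ?_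
  by_cases h : v i = 0
  · simp [h]
  · simp [eq_one_of_ne_zero_two h]

end ZMod

section ZModTwo

variable {M : Type*} [AddCommGroup M] [Module (ZMod 2) M]

theorem linearIndepOn_zmod_two_iff {s : Set M} :
    LinearIndepOn (ZMod 2) id s ↔
      ∀ t : Finset M, ↑t ⊆ s → t.Nonempty → ∑ x ∈ t, x ≠ 0 := by
  classical
  rw [linearIndepOn_iff']
  constructor
  · rintro h t hts ⟨x, hx⟩ hsum
    exact one_ne_zero (h t 1 hts (by simpa using hsum) x hx)
  · intro h t g hts hsum i hi
    by_contra hgi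
    refine h {x ∈ t | g x ≠ 0} ((coe_subset.2 (filter_subset _ t)).trans hts)
      ⟨i, mem_filter.2 ⟨hi, hgi⟩⟩ ?_
    rw [← hsum, sum_filter]
    refine sum_congr rfl fun x _ => ?_
    by_cases hgx : g x = 0
    · simp [hgx]
    · simp [ZMod.eq_one_of_ne_zero_two hgx]

theorem exists_finset_eq_sum_eq_zero_of_minimal_dependent {C : Set M}
    (hdep : ¬ LinearIndepOn (ZMod 2) id C) (hmin : ∀ C' ⊂ C, LinearIndepOn (ZMod 2) id C') :
    ∃ T : Finset M, ↑T = C ∧ ∑ x ∈ T, x = 0 := by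
  rw [linearIndepOn_zmod_two_iff] at hdep
  push Not at hdep
  obtain ⟨T, hTC, hT, hsum⟩ := hdep
  exact ⟨T, hTC.eq_of_not_ssubset fun hlt =>
    linearIndepOn_zmod_two_iff.1 (hmin _ hlt) T subset_rfl hT hsum, hsum⟩

end ZModTwo

theorem even_card_of_sum_eq_zero {M : Type*} [AddCommMonoid M] (f : M →+ ZMod 2)
    {T : Finset M} (hf : ∀ x ∈ T, f x = 1) (hsum : ∑ x ∈ T, x = 0) : Even #T := by
  rw [← ZMod.natCast_eq_zero_iff_even]
  calc (#T : ZMod 2) = ∑ x ∈ T, f x := by simp [sum_congr rfl hf]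
    _ = 0 := by rw [← map_sum, hsum, map_zero]

theorem r10_circuit_even (C : Set (Fin 5 → ZMod 2)) (hsub : C ⊆ R10Cols)
    (hdep : ¬ LinearIndependent (ZMod 2) (fun x : C => (x : Fin 5 → ZMod 2)))
    (hmin : ∀ C' ⊂ C,
      LinearIndependent (ZMod 2) (fun x : C' => (x : Fin 5 → ZMod 2))) :
    Even C.ncard := by
  obtain ⟨T, rfl, hsum⟩ := exists_finset_eq_sum_eq_zero_of_minimal_dependent hdep hmin
  rw [Set.ncard_coe_finset]
  refine even_card_of_sum_eq_zero (∑ i, Pi.evalAddMonoidHom (fun _ => ZMod 2) i) ?_ hsum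
  intro x hx
  have hweight : #{i | x i = 1} = 3 := hsub hx
  simp only [AddMonoidHom.finsetSum_apply, Pi.evalAddMonoidHom_apply,
    ZMod.sum_eq_card_filter_eq_one, hweight]
  rfl
end
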